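/- Let n≥1 and s∈(0,n]. There is a constant c=c(n,s)>0 such that the following holds. Let 0<δ<1/2 and C>0, and let A⊆ℝⁿ be a (δ,s,C)-Frostman set. Then there exists A′⊆A which is a (δ,s,100)-Katz-Tao set and satisfies 𝓔_δ(A′) ≥ c·δ^{−s}·(log(1/δ))^{−1}·C^{−1}. -/

import Mathlib

/-!
Take a maximal `2δ`-separated set `P ⊆ A`; then `𝓔_δ(A) ≤ 5ⁿ |P|` and, by the Frostman condition,
`|P ∩ B(x, r)| ≤ C rˢ 𝓔_δ(A)`. Let `Q ⊆ P` have maximal cardinality among the subsets with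
`|Q ∩ B(x, r)| ≤ 100 (r/δ)ˢ`; it is Katz–Tao, and each `p ∈ P \ Q` lies in a ball `B(x, r)` with
`|Q ∩ B(x, r)| ≥ (r/δ)ˢ`. A Vitali subfamily of these balls is disjoint, so its values of `(r/δ)ˢ`
add up to at most `|Q|`, while its fourfold enlargements cover `P \ Q`; hence
`|P \ Q| ≤ 9ⁿ C δˢ 𝓔_δ(A) |Q|`. As `C δˢ 𝓔_δ(A) ≥ 1`, this gives `|Q| ≥ δ⁻ˢ C⁻¹ / (2·45ⁿ)`,
which beats the claimed bound by the factor `log(1/δ) ≥ log 2`.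
-/

open MeasureTheory Metric Set
open scoped ENNReal

noncomputable section

abbrev EN (n : ℕ) := EuclideanSpace ℝ (Fin n)

/-- The `δ`-covering number of `X` (valued in `ℝ≥0∞`): the least number of balls of
radius `δ` needed to cover `X`. -/
def covNum {n : ℕ} (δ : ℝ) (X : Set (EN n)) : ℝ≥0∞ :=
  ⨅ (S : Finset (EN n)) (_ : X ⊆ ⋃ x ∈ S, closedBall x δ), (S.card : ℝ≥0∞)

/-- `A` is a `(δ,s,C)`-Katz-Tao set. -/
def IsKatzTao {n : ℕ} (δ s C : ℝ) (A : Set (EN n)) : Prop :=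
  A.Nonempty ∧ Bornology.IsBounded A ∧
  ∀ x : EN n, ∀ r : ℝ, δ ≤ r → r ≤ 1 →
    covNum δ (A ∩ closedBall x r) ≤ ENNReal.ofReal (C * (r / δ) ^ s)

/-- `A` is a `(δ,s,C)`-Frostman set. -/
def IsFrostman {n : ℕ} (δ s C : ℝ) (A : Set (EN n)) : Prop :=
  A.Nonempty ∧ Bornology.IsBounded A ∧
  ∀ x : EN n, ∀ r : ℝ, δ ≤ r → r ≤ 1 →
    covNum δ (A ∩ closedBall x r) ≤ ENNReal.ofReal (C * r ^ s) * covNum δ A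

open Finset
open scoped Classical

theorem card_le_mul_card_of_rich_closedBalls {α : Type*} [PseudoMetricSpace α] {R Q : Finset α}
    (x : α → α) (r a : α → ℝ) {L : ℝ} (hL : 0 ≤ L)
    (hmem : ∀ p ∈ R, p ∈ closedBall (x p) (r p))
    (hrich : ∀ p ∈ R, a p ≤ #(Q.filter (· ∈ closedBall (x p) (r p))))
    (hsparse : ∀ p ∈ R, #(R.filter (· ∈ closedBall (x p) (4 * r p))) ≤ L * a p) :
    (#R : ℝ) ≤ L * #Q := by
  obtain ⟨ρ, hρ⟩ := (R.finite_toSet.image r).bddAbove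
  obtain ⟨u, huR, hdisj, henl⟩ := Vitali.exists_disjoint_subfamily_covering_enlargement_closedBall
    (R : Set α) x r ρ (fun p hp => hρ ⟨p, hp, rfl⟩) 4 (by norm_num)
  set V := (R.finite_toSet.subset huR).toFinset
  have hVR : V ⊆ R := by simpa [V] using huR
  have hRV : R ⊆ V.biUnion fun b => R.filter (· ∈ closedBall (x b) (4 * r b)) := fun p hp => by
    obtain ⟨b, hbu, hpb⟩ := henl p hp
    exact mem_biUnion.mpr ⟨b, by simpa [V] using hbu, mem_filter.mpr ⟨hp, hpb (hmem p hp)⟩⟩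
  have hQV : ∑ b ∈ V, #(Q.filter (· ∈ closedBall (x b) (r b))) ≤ #Q := by
    have hdisjV : (V : Set α).PairwiseDisjoint fun b => Q.filter (· ∈ closedBall (x b) (r b)) := by
      rw [Set.Finite.coe_toFinset]
      exact fun b hb c hc hbc => disjoint_filter.mpr fun q _ hqb hqc =>
        Set.disjoint_left.mp (hdisj hb hc hbc) hqb hqc
    rw [← card_biUnion hdisjV]
    exact Finset.card_le_card (biUnion_subset.mpr fun b _ => filter_subset _ _)
  calc (#R : ℝ) ≤ ∑ b ∈ V, (#(R.filter (· ∈ closedBall (x b) (4 * r b))) : ℝ) := by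
        exact_mod_cast (Finset.card_le_card hRV).trans card_biUnion_le
    _ ≤ ∑ b ∈ V, L * a b := sum_le_sum fun b hb => hsparse b (hVR hb)
    _ ≤ ∑ b ∈ V, L * #(Q.filter (· ∈ closedBall (x b) (r b))) :=
        sum_le_sum fun b hb => mul_le_mul_of_nonneg_left (hrich b (hVR hb)) hL
    _ ≤ L * #Q := by rw [← mul_sum]; gcongr; exact_mod_cast hQV

section Euclidean

variable {n : ℕ}

theorem covNum_le_card {δ : ℝ} {X : Set (EN n)} (S : Finset (EN n))
    (h : X ⊆ ⋃ x ∈ S, closedBall x δ) : covNum δ X ≤ #S :=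
  iInf₂_le S h

theorem card_le_covNum {δ : ℝ} {Q : Finset (EN n)} {X : Set (EN n)} (hQX : ↑Q ⊆ X)
    (hsep : (Q : Set (EN n)).Pairwise (2 * δ < dist · ·)) : (#Q : ℝ≥0∞) ≤ covNum δ X := by
  refine le_iInf₂ fun S hS => ?_
  have hcenter (q : EN n) (hq : q ∈ Q) : ∃ c ∈ S, q ∈ closedBall c δ := by
    simpa using hS (hQX hq)
  choose! f hfS hf using hcenter
  refine Nat.cast_le.mpr (card_le_card_of_injOn f hfS fun p hp q hq hpq => ?_)
  by_contra hne
  have hp' := mem_closedBall.mp (hf p hp)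
  have hq' := mem_closedBall'.mp (hf q hq)
  rw [← hpq] at hq'
  linarith [hsep hp hq hne, dist_triangle p (f p) q]

theorem card_le_of_separated_subset_closedBall {r : ℝ} (hr : 0 < r) (k : ℕ) {x : EN n}
    {Q : Finset (EN n)} (hQ : ↑Q ⊆ closedBall x (k * r))
    (hsep : (Q : Set (EN n)).Pairwise (r < dist · ·)) : #Q ≤ (2 * k + 1) ^ n := by
  have hdisj : (Q : Set (EN n)).PairwiseDisjoint (ball · (r / 2)) :=
    fun p _ q _ hpq => ball_disjoint_ball (by linarith [hsep ‹_› ‹_› hpq])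
  have hsub : ⋃ p ∈ Q, ball p (r / 2) ⊆ ball x ((2 * k + 1) * (r / 2)) :=
    iUnion₂_subset fun p hp => ball_subset_ball' <| by
      linarith [mem_closedBall.mp (hQ hp)]
  have hvol : ∑ p ∈ Q, volume (ball p (r / 2)) ≤ volume (ball x ((2 * k + 1) * (r / 2))) := by
    rw [← measure_biUnion_finset hdisj fun p _ => measurableSet_ball]
    exact measure_mono hsub
  simp only [Measure.addHaar_ball_of_pos _ _ (half_pos hr),
    Measure.addHaar_ball_of_pos _ _ (by positivity : 0 < (2 * k + 1 : ℝ) * (r / 2)),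
    finrank_euclideanSpace_fin, sum_const, nsmul_eq_mul, ← mul_assoc] at hvol
  have hV := measure_ball_pos volume (0 : EN n) one_pos
  rw [ENNReal.mul_le_mul_iff_left hV.ne' measure_ball_lt_top.ne, mul_pow,
    ENNReal.ofReal_mul (by positivity), mul_comm, mul_comm (ENNReal.ofReal _),
    ENNReal.mul_le_mul_iff_left (by simp; positivity) ENNReal.ofReal_ne_top] at hvol
  exact_mod_cast hvol

theorem exists_separated_finset_covering {X : Set (EN n)} (hX : Bornology.IsBounded X) {ε : ℝ}
    (hε : 0 < ε) : ∃ P : Finset (EN n), ↑P ⊆ X ∧ (P : Set (EN n)).Pairwise (ε < dist · ·) ∧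
      X ⊆ ⋃ p ∈ P, closedBall p ε := by
  obtain ⟨R, -, hXR⟩ := hX.subset_closedBall_lt 0 0
  set k := ⌈R / ε⌉₊
  have hXk : X ⊆ closedBall 0 (k * ε) :=
    hXR.trans (closedBall_subset_closedBall ((div_le_iff₀ hε).mp (Nat.le_ceil _)))
  set K := (2 * k + 1) ^ n
  let Sep : Set (Finset (EN n)) := {P | ↑P ⊆ X ∧ (P : Set (EN n)).Pairwise (ε < dist · ·)}
  -- a separated finset of maximal cardinality exists, since all cardinalities are at most `K`
  obtain ⟨P, ⟨hPX, hPsep⟩, hPmax⟩ :=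
    (measure fun P : Finset (EN n) => K - #P).wf.has_min Sep ⟨∅, by simp [Sep]⟩
  refine ⟨P, hPX, hPsep, fun y hy => ?_⟩
  by_contra hyP
  simp only [mem_iUnion, mem_closedBall, not_exists, not_le] at hyP
  have hyP' : y ∉ P := fun h => by simpa using (hyP y h).trans' hε
  have hins : insert y P ∈ Sep := by
    refine ⟨by simpa [Set.insert_subset_iff] using ⟨hy, hPX⟩, ?_⟩
    rw [coe_insert, Set.pairwise_insert]
    exact ⟨hPsep, fun p hp _ => ⟨hyP p hp, dist_comm p y ▸ hyP p hp⟩⟩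
  have hcard : #(insert y P) ≤ K :=
    card_le_of_separated_subset_closedBall hε k (hins.1.trans hXk) hins.2
  rw [card_insert_of_notMem hyP'] at hcard
  exact hPmax _ hins (show K - #(insert y P) < K - #P by rw [card_insert_of_notMem hyP']; omega)

theorem exists_finset_card_le_closedBall_subset_biUnion {r : ℝ} (hr : 0 < r) (k : ℕ) (x : EN n) :
    ∃ U : Finset (EN n), #U ≤ (2 * k + 1) ^ n ∧ closedBall x (k * r) ⊆ ⋃ u ∈ U, closedBall u r := by
  obtain ⟨U, hUX, hUsep, hXU⟩ := exists_separated_finset_covering isBounded_closedBall hr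
    (X := closedBall x (k * r))
  exact ⟨U, card_le_of_separated_subset_closedBall hr k hUX hUsep, hXU⟩

theorem covNum_le_of_subset_biUnion_closedBall {δ : ℝ} (hδ : 0 < δ) (k : ℕ) {X : Set (EN n)}
    {P : Finset (EN n)} (hXP : X ⊆ ⋃ p ∈ P, closedBall p (k * δ)) :
    covNum δ X ≤ ((2 * k + 1) ^ n * #P : ℕ) := by
  choose U hUcard hUcov using fun p : EN n => exists_finset_card_le_closedBall_subset_biUnion hδ k p
  refine (covNum_le_card (P.biUnion U) fun y hy => ?_).trans (Nat.cast_le.mpr ?_)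
  · obtain ⟨p, hp, hyp⟩ := mem_iUnion₂.mp (hXP hy)
    obtain ⟨u, hu, hyu⟩ := mem_iUnion₂.mp (hUcov p hyp)
    exact mem_iUnion₂.mpr ⟨u, mem_biUnion.mpr ⟨p, hp, hu⟩, hyu⟩
  · calc #(P.biUnion U) ≤ ∑ p ∈ P, #(U p) := card_biUnion_le
      _ ≤ ∑ _p ∈ P, (2 * k + 1) ^ n := sum_le_sum fun p _ => hUcard p
      _ = (2 * k + 1) ^ n * #P := by rw [sum_const, smul_eq_mul, mul_comm]

theorem card_filter_closedBall_mul_le_of_forall {P : Finset (EN n)} {r m : ℝ} (hr : 0 < r) (k : ℕ)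
    (hm : ∀ y, (#(P.filter (· ∈ closedBall y r)) : ℝ) ≤ m) (x : EN n) :
    (#(P.filter (· ∈ closedBall x (k * r))) : ℝ) ≤ (2 * k + 1) ^ n * m := by
  obtain ⟨U, hUcard, hUcov⟩ := exists_finset_card_le_closedBall_subset_biUnion hr k x
  have hsub : P.filter (· ∈ closedBall x (k * r)) ⊆
      U.biUnion fun u => P.filter (· ∈ closedBall u r) := fun p hp => by
    obtain ⟨hpP, hpx⟩ := mem_filter.mp hp
    obtain ⟨u, hu, hpu⟩ := mem_iUnion₂.mp (hUcov hpx)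
    exact mem_biUnion.mpr ⟨u, hu, mem_filter.mpr ⟨hpP, hpu⟩⟩
  have hm0 : 0 ≤ m := (Nat.cast_nonneg _).trans (hm x)
  calc (#(P.filter (· ∈ closedBall x (k * r))) : ℝ)
      ≤ ∑ u ∈ U, (#(P.filter (· ∈ closedBall u r)) : ℝ) := by
        exact_mod_cast (Finset.card_le_card hsub).trans card_biUnion_le
    _ ≤ #U * m := by simpa using sum_le_sum fun u (_ : u ∈ U) => hm u
    _ ≤ (2 * k + 1) ^ n * m := by gcongr; exact_mod_cast hUcard

def IsKatzTaoFinset (δ s K : ℝ) (Q : Finset (EN n)) : Prop :=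
  ∀ x : EN n, ∀ r : ℝ, δ ≤ r → r ≤ 1 → (#(Q.filter (· ∈ closedBall x r)) : ℝ) ≤ K * (r / δ) ^ s

theorem IsKatzTaoFinset.isKatzTao {δ s K : ℝ} {Q : Finset (EN n)} (hδ : 0 ≤ δ)
    (hQ : IsKatzTaoFinset δ s K Q) (hne : Q.Nonempty) : IsKatzTao δ s K (Q : Set (EN n)) := by
  refine ⟨hne, Q.finite_toSet.isBounded, fun x r hr hr1 => ?_⟩
  refine (covNum_le_card (Q.filter (· ∈ closedBall x r)) fun q hq => ?_).trans ?_
  · exact mem_iUnion₂.mpr ⟨q, mem_filter.mpr hq, mem_closedBall_self hδ⟩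
  · simpa only [ENNReal.ofReal_natCast] using ENNReal.ofReal_le_ofReal (hQ x r hr hr1)

theorem exists_isKatzTaoFinset_subset_rich {δ s K : ℝ} (hδ : 0 < δ) (hs : 0 ≤ s) (hK : 2 ≤ K)
    (P : Finset (EN n)) : ∃ Q ⊆ P, IsKatzTaoFinset δ s K Q ∧ ∀ p ∈ P \ Q, ∃ x : EN n, ∃ r : ℝ,
      δ ≤ r ∧ r ≤ 1 ∧ p ∈ closedBall x r ∧ (r / δ) ^ s ≤ #(Q.filter (· ∈ closedBall x r)) := by
  have hratio {r : ℝ} (hr : δ ≤ r) : 1 ≤ (r / δ) ^ s :=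
    Real.one_le_rpow ((one_le_div hδ).mpr hr) hs
  have hempty : IsKatzTaoFinset δ s K (∅ : Finset (EN n)) := fun x r hr _ => by
    simpa using mul_nonneg (by linarith : (0 : ℝ) ≤ K) (zero_le_one.trans (hratio hr))
  obtain ⟨Q, hQ, hmax⟩ := exists_max_image (P.powerset.filter (IsKatzTaoFinset δ s K)) card
    ⟨∅, mem_filter.mpr ⟨empty_mem_powerset P, hempty⟩⟩
  obtain ⟨hQP, hQgood⟩ := mem_filter.mp hQ
  refine ⟨Q, mem_powerset.mp hQP, hQgood, fun p hp => ?_⟩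
  obtain ⟨hpP, hpQ⟩ := mem_sdiff.mp hp
  have hbad : ¬ IsKatzTaoFinset δ s K (insert p Q) := fun hgood => by
    have := hmax _ (mem_filter.mpr ⟨mem_powerset.mpr
      (insert_subset hpP (mem_powerset.mp hQP)), hgood⟩)
    rw [card_insert_of_notMem hpQ] at this
    omega
  simp only [IsKatzTaoFinset, not_forall, not_le] at hbad
  obtain ⟨x, r, hr, hr1, hfull⟩ := hbad
  have hpx : p ∈ closedBall x r := by
    by_contra hpx
    rw [filter_insert, if_neg hpx] at hfull
    exact (hQgood x r hr hr1).not_gt hfull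
  rw [filter_insert, if_pos hpx] at hfull
  have := (Nat.cast_le (α := ℝ)).mpr (card_insert_le p (Q.filter (· ∈ closedBall x r)))
  refine ⟨x, r, hr, hr1, hpx, ?_⟩
  push_cast at this
  nlinarith [hratio hr]

theorem IsKatzTaoFinset.exists_isKatzTaoFinset_subset_card_le {δ s m : ℝ} (hδ : 0 < δ)
    (hs : 0 ≤ s) (hm : 0 ≤ m) {P : Finset (EN n)} (hP : IsKatzTaoFinset δ s m P) :
    ∃ Q ⊆ P, IsKatzTaoFinset δ s 100 Q ∧ (#P : ℝ) ≤ (1 + 9 ^ n * m) * #Q := by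
  obtain ⟨Q, hQP, hQgood, hwit⟩ :=
    exists_isKatzTaoFinset_subset_rich (K := 100) hδ hs (by norm_num) P
  choose! x r hr hr1 hmem hrich using hwit
  have hrest : (#(P \ Q) : ℝ) ≤ 9 ^ n * m * #Q := by
    refine card_le_mul_card_of_rich_closedBalls x r (fun p => (r p / δ) ^ s) (by positivity)
      hmem hrich fun p hp => ?_
    have := card_filter_closedBall_mul_le_of_forall (by linarith [hr p hp]) 4
      (fun y => hP y (r p) (hr p hp) (hr1 p hp)) (x p)
    calc (#((P \ Q).filter (· ∈ closedBall (x p) (4 * r p))) : ℝ)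
        ≤ #(P.filter (· ∈ closedBall (x p) (4 * r p))) := by
          exact_mod_cast Finset.card_le_card (filter_subset_filter _ sdiff_subset)
      _ ≤ (2 * (4 : ℕ) + 1) ^ n * (m * (r p / δ) ^ s) := by exact_mod_cast this
      _ = 9 ^ n * m * (r p / δ) ^ s := by norm_num; ring
  refine ⟨Q, hQP, hQgood, ?_⟩
  rw [← card_sdiff_add_card_eq_card hQP]
  push_cast
  linarith

theorem IsFrostman.isKatzTaoFinset {δ s C : ℝ} {A : Set (EN n)} (hδ : 0 < δ) (hC : 0 ≤ C)
    (hA : IsFrostman δ s C A) (hN : covNum δ A ≠ ⊤) {P : Finset (EN n)} (hPA : ↑P ⊆ A)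
    (hsep : (P : Set (EN n)).Pairwise (2 * δ < dist · ·)) :
    IsKatzTaoFinset δ s (C * δ ^ s * (covNum δ A).toReal) P := by
  intro x r hr hr1
  have hcard := card_le_covNum (X := A ∩ closedBall x r)
    (fun p hp => ⟨hPA (mem_filter.mp hp).1, (mem_filter.mp hp).2⟩)
    (hsep.mono (coe_subset.mpr (filter_subset _ _)))
  have hCr : 0 ≤ C * r ^ s := mul_nonneg hC (Real.rpow_nonneg (hδ.le.trans hr) s)
  have := ENNReal.toReal_mono (ENNReal.mul_ne_top ENNReal.ofReal_ne_top hN)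
    (hcard.trans (hA.2.2 x r hr hr1))
  rw [ENNReal.toReal_mul, ENNReal.toReal_ofReal hCr, ENNReal.toReal_natCast] at this
  calc _ ≤ C * r ^ s * (covNum δ A).toReal := this
    _ = C * δ ^ s * (covNum δ A).toReal * (r / δ) ^ s := by
        rw [Real.div_rpow (hδ.le.trans hr) hδ.le]
        field_simp [(Real.rpow_pos_of_pos hδ s).ne']

theorem IsFrostman.exists_isKatzTaoFinset_subset {δ s C : ℝ} {A : Set (EN n)} (hδ : 0 < δ)
    (hδ1 : δ ≤ 1) (hs : 0 ≤ s) (hC : 0 ≤ C) (hA : IsFrostman δ s C A) :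
    ∃ Q : Finset (EN n), ↑Q ⊆ A ∧ (Q : Set (EN n)).Pairwise (2 * δ < dist · ·) ∧
      IsKatzTaoFinset δ s 100 Q ∧ 1 ≤ 2 * 45 ^ n * C * δ ^ s * #Q := by
  obtain ⟨P, hPA, hPsep, hAP⟩ := exists_separated_finset_covering hA.2.1 (by positivity : 0 < 2 * δ)
  have hNP : covNum δ A ≤ (5 ^ n * #P : ℕ) := by
    simpa using covNum_le_of_subset_biUnion_closedBall hδ 2 (P := P) (by exact_mod_cast hAP)
  have hNtop : covNum δ A ≠ ⊤ := ne_top_of_le_ne_top (ENNReal.natCast_ne_top _) hNP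
  set N := (covNum δ A).toReal
  have hNP' : N ≤ 5 ^ n * #P := by
    simpa using ENNReal.toReal_mono (ENNReal.natCast_ne_top _) hNP
  have hPkt := hA.isKatzTaoFinset hδ hC hNtop hPA hPsep
  have hone : 1 ≤ C * δ ^ s * N := by
    obtain ⟨p, hp, -⟩ := mem_iUnion₂.mp (hAP hA.1.some_mem)
    have hmem : p ∈ P.filter (· ∈ closedBall p δ) := mem_filter.mpr ⟨hp, mem_closedBall_self hδ.le⟩
    have := (Nat.one_le_cast.mpr (card_pos.mpr ⟨p, hmem⟩)).trans (hPkt p δ le_rfl hδ1)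
    rwa [div_self hδ.ne', Real.one_rpow, mul_one] at this
  obtain ⟨Q, hQP, hQgood, hPQ⟩ := hPkt.exists_isKatzTaoFinset_subset_card_le hδ hs (by linarith)
  have hN : 0 < N := pos_of_mul_pos_right (one_pos.trans_le hone) (by positivity)
  have hNQ : N ≤ 2 * 45 ^ n * C * δ ^ s * #Q * N := calc
    N ≤ 5 ^ n * ((1 + 9 ^ n * (C * δ ^ s * N)) * #Q) := hNP'.trans (by gcongr)
    _ ≤ 5 ^ n * ((2 * 9 ^ n * (C * δ ^ s * N)) * #Q) := by
        gcongr
        nlinarith [one_le_pow₀ (M₀ := ℝ) (n := n) (by norm_num : (1 : ℝ) ≤ 9)]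
    _ = 2 * 45 ^ n * C * δ ^ s * #Q * N := by
        rw [show (45 : ℝ) ^ n = 5 ^ n * 9 ^ n by rw [← mul_pow]; norm_num]; ring
  refine ⟨Q, fun q hq => hPA (hQP hq), hPsep.mono (coe_subset.mpr hQP), hQgood, ?_⟩
  exact le_of_mul_le_mul_right (by linarith) hN

end Euclidean

theorem statement16_general (n : ℕ) (s : ℝ) (hs0 : 0 < s) :
    ∃ c : ℝ, 0 < c ∧
    ∀ (δ C : ℝ) (A : Set (EN n)), 0 < δ → δ < 1 / 2 → 0 < C →
      IsFrostman δ s C A →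
      ∃ A' ⊆ A, IsKatzTao δ s 100 A' ∧
        ENNReal.ofReal (c * δ ^ (-s) * (Real.log (1 / δ))⁻¹ * C⁻¹) ≤ covNum δ A' := by
  refine ⟨Real.log 2 / (2 * 45 ^ n), by positivity, fun δ C A hδ hδ2 hC hA => ?_⟩
  obtain ⟨Q, hQA, hQsep, hQgood, hQcard⟩ :=
    hA.exists_isKatzTaoFinset_subset hδ (by linarith) hs0.le hC.le
  have hD : 0 < 2 * 45 ^ n * C * δ ^ s := by positivity
  have hQ : Q.Nonempty :=
    card_pos.mp <| Nat.cast_pos.mp <| pos_of_mul_pos_right (one_pos.trans_le hQcard) hD.le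
  refine ⟨Q, hQA, hQgood.isKatzTao hδ.le hQ, ?_⟩
  have hlog : Real.log 2 ≤ Real.log (1 / δ) :=
    Real.log_le_log two_pos (by rw [le_div_iff₀ hδ]; linarith)
  calc ENNReal.ofReal (Real.log 2 / (2 * 45 ^ n) * δ ^ (-s) * (Real.log (1 / δ))⁻¹ * C⁻¹)
      = ENNReal.ofReal (Real.log 2 / Real.log (1 / δ) * (2 * 45 ^ n * C * δ ^ s)⁻¹) := by
        rw [Real.rpow_neg hδ.le]; ring_nf
    _ ≤ ENNReal.ofReal (2 * 45 ^ n * C * δ ^ s)⁻¹ := by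
        refine ENNReal.ofReal_le_ofReal (mul_le_of_le_one_left (inv_nonneg.mpr hD.le) ?_)
        exact div_le_one_of_le₀ hlog ((Real.log_nonneg one_le_two).trans hlog)
    _ ≤ #Q := by simpa using ENNReal.ofReal_le_ofReal ((inv_le_iff_one_le_mul₀' hD).mpr hQcard)
    _ ≤ covNum δ Q := card_le_covNum subset_rfl hQsep

theorem statement16 (n : ℕ) (hn : 1 ≤ n) (s : ℝ) (hs0 : 0 < s) (hsn : s ≤ (n : ℝ)) :
    ∃ c : ℝ, 0 < c ∧
    ∀ (δ C : ℝ) (A : Set (EN n)), 0 < δ → δ < 1 / 2 → 0 < C →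
      IsFrostman δ s C A →
      ∃ A' ⊆ A, IsKatzTao δ s 100 A' ∧
        ENNReal.ofReal (c * δ ^ (-s) * (Real.log (1 / δ))⁻¹ * C⁻¹) ≤ covNum δ A' :=
  statement16_general n s hs0
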